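/- arXiv:2111.01643 — 3 statements merged into one kernel-verified Lean document; each statement's English description precedes it below -/
import Mathlib

section
/- For x = (ψ₁,ψ₂) ∈ H₁ × H₂ the following are equivalent: (i) B(x,x) = 0; (ii) Φ(x) = 0; (iii) p₁ψ₁ = ψ₁ (i.e. ψ₁ ∈ O₁), p₂ψ₂ = ψ₂ (i.e. ψ₂ ∈ O₂), and U(p₁ψ₁) + p₂ψ₂ = 0. In particular the set N = {x ∈ H₁ × H₂ : B(x,x) = 0} of null vectors of B is a closed complex-linear subspace of H₁ × H₂, namely the kernel of Φ. -/
/-! Writing `a = p₁ψ₁` and `b = p₂ψ₂`, the orthogonal splittings `ψᵢ = pᵢψᵢ + (ψᵢ - pᵢψᵢ)` and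
`⟪ψ₁, U⁻¹b⟫ = ⟪Ua, b⟫` turn `B(x,x)` into `‖ψ₁ - a‖² + ‖ψ₂ - b‖² + ‖Ua + b‖²`, the sum of the squared
norms of the three components of `Φ(x)`. So `B(x,x) = 0` exactly when `Φ(x) = 0`, and the null
vectors form the kernel of the continuous linear map `Φ`. -/

open scoped InnerProductSpace ComplexConjugate

noncomputable section

variable {H₁ H₂ : Type*}
  [NormedAddCommGroup H₁] [InnerProductSpace ℂ H₁]
  [NormedAddCommGroup H₂] [InnerProductSpace ℂ H₂]

/-- The pre-inner product `B` on `H₁ × H₂` of the minimally glued one-particle structure. -/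
def gluedForm (O₁ : Submodule ℂ H₁) (O₂ : Submodule ℂ H₂)
    [Submodule.HasOrthogonalProjection O₁] [Submodule.HasOrthogonalProjection O₂]
    (U : O₁ ≃ₗᵢ[ℂ] O₂) (x y : H₁ × H₂) : ℂ :=
  ⟪x.1, y.1⟫_ℂ + ⟪x.2, y.2⟫_ℂ
    + ⟪x.1, (U.symm (Submodule.orthogonalProjectionOnto O₂ y.2) : H₁)⟫_ℂ
    + ⟪x.2, (U (Submodule.orthogonalProjectionOnto O₁ y.1) : H₂)⟫_ℂ

/-- The map `Φ : H₁ × H₂ → H₁ × H₂ × H₂`,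
`Φ(ψ₁,ψ₂) = (ψ₁ − p₁ψ₁, ψ₂ − p₂ψ₂, U(p₁ψ₁) + p₂ψ₂)`. -/
def gluedMap (O₁ : Submodule ℂ H₁) (O₂ : Submodule ℂ H₂)
    [Submodule.HasOrthogonalProjection O₁] [Submodule.HasOrthogonalProjection O₂]
    (U : O₁ ≃ₗᵢ[ℂ] O₂) (x : H₁ × H₂) : H₁ × H₂ × H₂ :=
  (x.1 - (Submodule.orthogonalProjectionOnto O₁ x.1 : H₁),
   x.2 - (Submodule.orthogonalProjectionOnto O₂ x.2 : H₂),
   (U (Submodule.orthogonalProjectionOnto O₁ x.1) : H₂) + (Submodule.orthogonalProjectionOnto O₂ x.2 : H₂))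

open Submodule

theorem Submodule.inner_self_eq_inner_sub_orthogonalProjectionOnto_add {𝕜 E : Type*} [RCLike 𝕜]
    [NormedAddCommGroup E] [InnerProductSpace 𝕜 E] (K : Submodule 𝕜 E) [K.HasOrthogonalProjection]
    (v : E) :
    ⟪v, v⟫_𝕜 = ⟪v - K.orthogonalProjectionOnto v, v - K.orthogonalProjectionOnto v⟫_𝕜
      + ⟪(K.orthogonalProjectionOnto v : E), K.orthogonalProjectionOnto v⟫_𝕜 := by
  have h : ⟪v - K.orthogonalProjectionOnto v, (K.orthogonalProjectionOnto v : E)⟫_𝕜 = 0 :=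
    K.starProjection_inner_eq_zero v _ (K.orthogonalProjectionOnto v).2
  conv_lhs => rw [← sub_add_cancel v (K.orthogonalProjectionOnto v : E)]
  rw [inner_add_left, inner_add_right, inner_add_right, h, inner_eq_zero_symm.mp h]
  ring

theorem norm_sq_add_norm_sq_add_norm_sq_eq_zero_iff {E F G : Type*} [NormedAddCommGroup E]
    [NormedAddCommGroup F] [NormedAddCommGroup G] (u : E) (v : F) (w : G) :
    ‖u‖ ^ 2 + ‖v‖ ^ 2 + ‖w‖ ^ 2 = 0 ↔ (u, v, w) = 0 := by
  rw [add_eq_zero_iff_of_nonneg (by positivity) (by positivity),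
    add_eq_zero_iff_of_nonneg (by positivity) (by positivity)]
  simp [Prod.ext_iff, and_assoc]

section Glued

variable (O₁ : Submodule ℂ H₁) (O₂ : Submodule ℂ H₂)
  [O₁.HasOrthogonalProjection] [O₂.HasOrthogonalProjection] (U : O₁ ≃ₗᵢ[ℂ] O₂)

theorem gluedForm_self (x : H₁ × H₂) :
    gluedForm O₁ O₂ U x x =
      ((‖x.1 - (O₁.orthogonalProjectionOnto x.1 : H₁)‖ ^ 2
        + ‖x.2 - (O₂.orthogonalProjectionOnto x.2 : H₂)‖ ^ 2
        + ‖(U (O₁.orthogonalProjectionOnto x.1) : H₂) + O₂.orthogonalProjectionOnto x.2‖ ^ 2 : ℝ)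
        : ℂ) := by
  set a := O₁.orthogonalProjectionOnto x.1
  set b := O₂.orthogonalProjectionOnto x.2
  have cross₁ : ⟪x.1, (U.symm b : H₁)⟫_ℂ = ⟪(U a : H₂), b⟫_ℂ := by
    rw [← inner_orthogonalProjectionOnto_eq_of_mem_right]
    exact (U.inner_map_eq_flip a b).symm.trans (O₂.coe_inner _ _)
  have cross₂ : ⟪x.2, (U a : H₂)⟫_ℂ = ⟪(b : H₂), U a⟫_ℂ :=
    (inner_orthogonalProjectionOnto_eq_of_mem_right _ _).symm
  have isometry : ⟪(a : H₁), a⟫_ℂ = ⟪(U a : H₂), U a⟫_ℂ := by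
    rw [← O₁.coe_inner, ← O₂.coe_inner, U.inner_map_map]
  calc gluedForm O₁ O₂ U x x
      = (⟪x.1 - a, x.1 - a⟫_ℂ + ⟪(a : H₁), a⟫_ℂ) + (⟪x.2 - b, x.2 - b⟫_ℂ + ⟪(b : H₂), b⟫_ℂ)
        + ⟪(U a : H₂), b⟫_ℂ + ⟪(b : H₂), U a⟫_ℂ := by
        rw [gluedForm, cross₁, cross₂, ← O₁.inner_self_eq_inner_sub_orthogonalProjectionOnto_add,
          ← O₂.inner_self_eq_inner_sub_orthogonalProjectionOnto_add]
    _ = ⟪x.1 - a, x.1 - a⟫_ℂ + ⟪x.2 - b, x.2 - b⟫_ℂ + ⟪(U a : H₂) + b, (U a : H₂) + b⟫_ℂ := by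
        rw [isometry, inner_add_left, inner_add_right, inner_add_right]
        ring
    _ = _ := by
        simp only [inner_self_eq_norm_sq_to_K]
        push_cast
        rfl

theorem gluedForm_self_eq_zero_iff (x : H₁ × H₂) :
    gluedForm O₁ O₂ U x x = 0 ↔ gluedMap O₁ O₂ U x = 0 := by
  rw [gluedForm_self, Complex.ofReal_eq_zero, norm_sq_add_norm_sq_add_norm_sq_eq_zero_iff]
  rfl

theorem gluedMap_eq_zero_iff (x : H₁ × H₂) :
    gluedMap O₁ O₂ U x = 0 ↔
      (O₁.orthogonalProjectionOnto x.1 : H₁) = x.1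
        ∧ (O₂.orthogonalProjectionOnto x.2 : H₂) = x.2
        ∧ (U (O₁.orthogonalProjectionOnto x.1) : H₂) + O₂.orthogonalProjectionOnto x.2 = 0 := by
  simp only [gluedMap, Prod.ext_iff, Prod.fst_zero, Prod.snd_zero, sub_eq_zero, eq_comm (a := x.1),
    eq_comm (a := x.2)]

def gluedMapL : (H₁ × H₂) →L[ℂ] H₁ × H₂ × H₂ :=
  ((ContinuousLinearMap.id ℂ H₁ - O₁.starProjection) ∘L ContinuousLinearMap.fst ℂ H₁ H₂).prod
    (((ContinuousLinearMap.id ℂ H₂ - O₂.starProjection) ∘L ContinuousLinearMap.snd ℂ H₁ H₂).prod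
      ((O₂.subtypeL ∘L (U.toContinuousLinearEquiv : O₁ →L[ℂ] O₂) ∘L O₁.orthogonalProjectionOnto).coprod
        O₂.starProjection))

theorem coe_gluedMapL : ⇑(gluedMapL O₁ O₂ U) = gluedMap O₁ O₂ U := rfl

end Glued

/-- Characterization of the null vectors of `B`: (i) `B(x,x) = 0` iff (ii) `Φ x = 0` iff
(iii) `p₁ψ₁ = ψ₁`, `p₂ψ₂ = ψ₂` and `U(p₁ψ₁) + p₂ψ₂ = 0`; moreover the set of null vectors
is a closed complex-linear subspace of `H₁ × H₂`, namely the kernel of `Φ`. -/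
theorem gluedForm_null_vectors (O₁ : Submodule ℂ H₁) (O₂ : Submodule ℂ H₂)
    [Submodule.HasOrthogonalProjection O₁] [Submodule.HasOrthogonalProjection O₂]
    (U : O₁ ≃ₗᵢ[ℂ] O₂) :
    (∀ x : H₁ × H₂,
      (gluedForm O₁ O₂ U x x = 0 ↔ gluedMap O₁ O₂ U x = 0)
      ∧ (gluedForm O₁ O₂ U x x = 0 ↔
          ((Submodule.orthogonalProjectionOnto O₁ x.1 : H₁) = x.1
            ∧ (Submodule.orthogonalProjectionOnto O₂ x.2 : H₂) = x.2
            ∧ (U (Submodule.orthogonalProjectionOnto O₁ x.1) : H₂)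
                + (Submodule.orthogonalProjectionOnto O₂ x.2 : H₂) = 0)))
    ∧ ({x : H₁ × H₂ | gluedForm O₁ O₂ U x x = 0}
        = {x : H₁ × H₂ | gluedMap O₁ O₂ U x = 0})
    ∧ (∃ S : Submodule ℂ (H₁ × H₂),
        (S : Set (H₁ × H₂)) = {x : H₁ × H₂ | gluedForm O₁ O₂ U x x = 0}
        ∧ IsClosed (S : Set (H₁ × H₂))) := by
  refine ⟨fun x => ⟨gluedForm_self_eq_zero_iff O₁ O₂ U x,
      (gluedForm_self_eq_zero_iff O₁ O₂ U x).trans (gluedMap_eq_zero_iff O₁ O₂ U x)⟩,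
    Set.ext (gluedForm_self_eq_zero_iff O₁ O₂ U), (gluedMapL O₁ O₂ U).ker, ?_,
    (gluedMapL O₁ O₂ U).isClosed_ker⟩
  ext x
  rw [SetLike.mem_coe, LinearMap.mem_ker, ContinuousLinearMap.coe_coe, coe_gluedMapL]
  exact (gluedForm_self_eq_zero_iff O₁ O₂ U x).symm

end
end

section
/- The range of the linear map Φ is exactly O₁ᗮ × O₂ᗮ × O₂, where Oᵢᗮ denotes the orthogonal complement of Oᵢ in Hᵢ; that is, Φ maps H₁ × H₂ onto O₁ᗮ × O₂ᗮ × O₂. Consequently, the quotient of H₁ × H₂ by the null space of B, equipped with the inner product induced by B, is unitarily equivalent (via the map induced by Φ) to the Hilbert space O₁ᗮ × O₂ᗮ × O₂. -/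
/-!
Expanding `⟪Φx, Φy⟫`, the terms `⟪p₁x₁, p₁y₁⟫` and `⟪p₂x₂, p₂y₂⟫` cancel, and since the `pᵢ` are
self-adjoint and `U` is unitary the cross terms become `⟪x₁, U⁻¹p₂y₂⟫` and `⟪x₂, Up₁y₁⟫`; so `Φ`
carries `B` to the product inner product, and definiteness of the latter gives
`Φx = Φy ↔ B(x - y, x - y) = 0`. A point `(z₁, z₂, w)` of `O₁ᗮ × O₂ᗮ × O₂` is `Φ(z₁ + U⁻¹w, z₂)`.
-/

open scoped InnerProductSpace ComplexConjugate

noncomputable section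

variable {H₁ H₂ : Type*}
  [NormedAddCommGroup H₁] [InnerProductSpace ℂ H₁]
  [NormedAddCommGroup H₂] [InnerProductSpace ℂ H₂]

/-- The inner product of the product Hilbert space `H₁ × H₂ × H₂`. -/
def prodInner (x y : H₁ × H₂ × H₂) : ℂ :=
  ⟪x.1, y.1⟫_ℂ + ⟪x.2.1, y.2.1⟫_ℂ + ⟪x.2.2, y.2.2⟫_ℂ

namespace Submodule

variable {E : Type*} [NormedAddCommGroup E] [InnerProductSpace ℂ E]
  (K : Submodule ℂ E) [K.HasOrthogonalProjection]

theorem inner_sub_orthogonalProjectionOnto (x y : E) :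
    ⟪x - (K.orthogonalProjectionOnto x : E), y - (K.orthogonalProjectionOnto y : E)⟫_ℂ
      = ⟪x, y⟫_ℂ - ⟪K.orthogonalProjectionOnto x, K.orthogonalProjectionOnto y⟫_ℂ := by
  have hx : ⟪x, (K.orthogonalProjectionOnto y : E)⟫_ℂ
      = ⟪K.orthogonalProjectionOnto x, K.orthogonalProjectionOnto y⟫_ℂ :=
    (inner_orthogonalProjectionOnto_eq_of_mem_right _ x).symm
  have hy : ⟪(K.orthogonalProjectionOnto x : E), y⟫_ℂ
      = ⟪K.orthogonalProjectionOnto x, K.orthogonalProjectionOnto y⟫_ℂ :=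
    (inner_orthogonalProjectionOnto_eq_of_mem_left _ y).symm
  rw [inner_sub_left, inner_sub_right, inner_sub_right, hx, hy, coe_inner]
  ring

end Submodule

theorem prodInner_self (z : H₁ × H₂ × H₂) :
    prodInner z z = ((‖z.1‖ ^ 2 + ‖z.2.1‖ ^ 2 + ‖z.2.2‖ ^ 2 : ℝ) : ℂ) := by
  simp only [prodInner, inner_self_eq_norm_sq_to_K]
  push_cast
  rfl

theorem prodInner_self_eq_zero {z : H₁ × H₂ × H₂} : prodInner z z = 0 ↔ z = 0 := by
  rw [prodInner_self, Complex.ofReal_eq_zero,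
    add_eq_zero_iff_of_nonneg (by positivity) (by positivity),
    add_eq_zero_iff_of_nonneg (by positivity) (by positivity)]
  simp only [pow_eq_zero_iff two_ne_zero, norm_eq_zero, Prod.ext_iff, Prod.fst_zero,
    Prod.snd_zero, and_assoc]

section gluedMap

variable (O₁ : Submodule ℂ H₁) (O₂ : Submodule ℂ H₂)
  [O₁.HasOrthogonalProjection] [O₂.HasOrthogonalProjection] (U : O₁ ≃ₗᵢ[ℂ] O₂)

theorem gluedMap_sub (x y : H₁ × H₂) :
    gluedMap O₁ O₂ U (x - y) = gluedMap O₁ O₂ U x - gluedMap O₁ O₂ U y := by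
  simp only [gluedMap, Prod.fst_sub, Prod.snd_sub, map_sub, Submodule.coe_sub, Prod.mk_sub_mk,
    Prod.mk.injEq]
  exact ⟨by abel, by abel, by abel⟩

theorem prodInner_gluedMap (x y : H₁ × H₂) :
    prodInner (gluedMap O₁ O₂ U x) (gluedMap O₁ O₂ U y) = gluedForm O₁ O₂ U x y := by
  simp only [prodInner, gluedMap, gluedForm, Submodule.inner_sub_orthogonalProjectionOnto]
  set a := O₁.orthogonalProjectionOnto x.1
  set b := O₁.orthogonalProjectionOnto y.1
  set c := O₂.orthogonalProjectionOnto x.2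
  set d := O₂.orthogonalProjectionOnto y.2
  have hUU : ⟪U a, U b⟫_ℂ = ⟪a, b⟫_ℂ := U.inner_map_map a b
  have hUd : ⟪U a, d⟫_ℂ = ⟪x.1, (U.symm d : H₁)⟫_ℂ := by
    rw [U.inner_map_eq_flip, Submodule.inner_orthogonalProjectionOnto_eq_of_mem_right]
  have hcU : ⟪c, U b⟫_ℂ = ⟪x.2, (U b : H₂)⟫_ℂ :=
    Submodule.inner_orthogonalProjectionOnto_eq_of_mem_right _ _
  rw [← Submodule.coe_add, ← Submodule.coe_add, ← Submodule.coe_inner, inner_add_left,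
    inner_add_right, inner_add_right, hUU, hUd, hcU]
  ring

theorem gluedMap_mem (x : H₁ × H₂) :
    (gluedMap O₁ O₂ U x).1 ∈ O₁ᗮ ∧ (gluedMap O₁ O₂ U x).2.1 ∈ O₂ᗮ
      ∧ (gluedMap O₁ O₂ U x).2.2 ∈ O₂ :=
  ⟨O₁.sub_starProjection_mem_orthogonal x.1, O₂.sub_starProjection_mem_orthogonal x.2,
    add_mem (SetLike.coe_mem _) (SetLike.coe_mem _)⟩

theorem gluedMap_add_symm {z₁ : H₁} {z₂ : H₂} (h₁ : z₁ ∈ O₁ᗮ) (h₂ : z₂ ∈ O₂ᗮ) (w : O₂) :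
    gluedMap O₁ O₂ U (z₁ + U.symm w, z₂) = (z₁, z₂, (w : H₂)) := by
  have hp₁ : O₁.orthogonalProjectionOnto (z₁ + U.symm w) = U.symm w := by
    rw [map_add, Submodule.orthogonalProjectionOnto_apply_of_mem_orthogonal h₁,
      Submodule.orthogonalProjectionOnto_mem_subspace_eq_self, zero_add]
  have hp₂ : O₂.orthogonalProjectionOnto z₂ = 0 :=
    Submodule.orthogonalProjectionOnto_apply_of_mem_orthogonal h₂
  simp [gluedMap, hp₁, hp₂]

end gluedMap

/-- The range of `Φ` is exactly `O₁ᗮ × O₂ᗮ × O₂`; moreover `Φ` identifies two vectors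
precisely when their difference is a null vector of `B`, and it carries `B` to the inner
product of the product Hilbert space `O₁ᗮ × O₂ᗮ × O₂ ⊆ H₁ × H₂ × H₂`.  Hence the quotient
of `H₁ × H₂` by the null space of `B`, with the inner product induced by `B`, is unitarily
equivalent via the map induced by `Φ` to the Hilbert space `O₁ᗮ × O₂ᗮ × O₂`. -/
theorem gluedMap_range (O₁ : Submodule ℂ H₁) (O₂ : Submodule ℂ H₂)
    [Submodule.HasOrthogonalProjection O₁] [Submodule.HasOrthogonalProjection O₂]
    (U : O₁ ≃ₗᵢ[ℂ] O₂) :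
    Set.range (gluedMap O₁ O₂ U)
      = {z : H₁ × H₂ × H₂ | z.1 ∈ O₁ᗮ ∧ z.2.1 ∈ O₂ᗮ ∧ z.2.2 ∈ O₂}
    ∧ (∀ x y : H₁ × H₂, gluedMap O₁ O₂ U x = gluedMap O₁ O₂ U y
        ↔ gluedForm O₁ O₂ U (x - y) (x - y) = 0)
    ∧ (∀ x y : H₁ × H₂,
        prodInner (gluedMap O₁ O₂ U x) (gluedMap O₁ O₂ U y) = gluedForm O₁ O₂ U x y) := by
  refine ⟨?_, fun x y => ?_, prodInner_gluedMap O₁ O₂ U⟩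
  · ext z
    refine ⟨?_, fun ⟨h₁, h₂, h₃⟩ => ?_⟩
    · rintro ⟨x, rfl⟩
      exact gluedMap_mem O₁ O₂ U x
    · exact ⟨_, gluedMap_add_symm O₁ O₂ U h₁ h₂ ⟨z.2.2, h₃⟩⟩
  · rw [← prodInner_gluedMap, gluedMap_sub, prodInner_self_eq_zero, sub_eq_zero]

end
end

section
/- The glued map is well defined: for all f₁, g₁ ∈ V₁ and f₂, g₂ ∈ V₂ with f₁ + f₂ = g₁ + g₂ in V, the element ((K₁f₁ − K₁g₁), (K₂f₂ − K₂g₂)) of H₁ × H₂ is a null vector of B, i.e. B((K₁(f₁−g₁), K₂(f₂−g₂)), (K₁(f₁−g₁), K₂(f₂−g₂))) = 0; equivalently Φ(K₁f₁, K₂f₂) = Φ(K₁g₁, K₂g₂). Consequently the assignment K̃(f) = Φ(K₁f₁, K₂f₂), for any decomposition f = f₁ + f₂ with f₁ ∈ V₁, f₂ ∈ V₂, is a well-defined real-linear map on the subspace V₁ + V₂ of V. -/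
/-!
Expanding `⟨Φx, Φy⟩` with `⟨ψ, p ψ'⟩ = ⟨p ψ, p ψ'⟩` and the unitarity of `U` gives exactly
`B(x, y)`, so a vector is `B`-null as soon as `Φ` kills it. Compatibility says that whenever
`f₁ + f₂ = 0` the pair `(K₁f₁, K₂f₂)` has the form `(ψ, -Uψ)` with `ψ ∈ O₁`, and
`Φ(ψ, -Uψ) = 0`. Hence the real-linear map `(f₁, f₂) ↦ Φ(K₁f₁, K₂f₂)` vanishes on the kernel of
the summation map `V₁ × V₂ → V₁ ⊔ V₂` and descends to `V₁ ⊔ V₂`.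
-/

open scoped InnerProductSpace ComplexConjugate

noncomputable section

variable {H₁ H₂ : Type*}
  [NormedAddCommGroup H₁] [InnerProductSpace ℂ H₁]
  [NormedAddCommGroup H₂] [InnerProductSpace ℂ H₂]

def gluedMapₗ (O₁ : Submodule ℂ H₁) (O₂ : Submodule ℂ H₂)
    [Submodule.HasOrthogonalProjection O₁] [Submodule.HasOrthogonalProjection O₂]
    (U : O₁ ≃ₗᵢ[ℂ] O₂) : (H₁ × H₂) →ₗ[ℂ] H₁ × H₂ × H₂ where
  toFun := gluedMap O₁ O₂ U
  map_add' x y := by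
    simp only [gluedMap, Prod.fst_add, Prod.snd_add, map_add, Submodule.coe_add, Prod.mk_add_mk,
      Prod.mk.injEq]
    refine ⟨by abel, by abel, by abel⟩
  map_smul' c x := by
    simp only [gluedMap, Prod.smul_fst, Prod.smul_snd, map_smul, Submodule.coe_smul,
      Prod.smul_mk, RingHom.id_apply, smul_sub, smul_add]

theorem Submodule.inner_sub_starProjection {𝕜 E : Type*} [RCLike 𝕜] [NormedAddCommGroup E]
    [InnerProductSpace 𝕜 E] (K : Submodule 𝕜 E) [K.HasOrthogonalProjection] (x y : E) :
    ⟪x - K.starProjection x, y - K.starProjection y⟫_𝕜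
      = ⟪x, y⟫_𝕜 - ⟪K.starProjection x, K.starProjection y⟫_𝕜 := by
  have hx : ⟪x - K.starProjection x, K.starProjection y⟫_𝕜 = 0 :=
    K.starProjection_inner_eq_zero x _ (K.starProjection_apply_mem y)
  calc ⟪x - K.starProjection x, y - K.starProjection y⟫_𝕜 = ⟪x - K.starProjection x, y⟫_𝕜 := by
        rw [inner_sub_right, hx, sub_zero]
    _ = ⟪x, y⟫_𝕜 - ⟪x - K.starProjection x + K.starProjection x, K.starProjection y⟫_𝕜 := by
        rw [inner_sub_left, K.inner_starProjection_left_eq_right, sub_add_cancel]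
    _ = ⟪x, y⟫_𝕜 - ⟪K.starProjection x, K.starProjection y⟫_𝕜 := by
        rw [inner_add_left, hx, zero_add]

theorem Submodule.exists_linearMap_sup_apply_add {R V W : Type*} [Ring R] [AddCommGroup V]
    [Module R V] [AddCommGroup W] [Module R W] (V₁ V₂ : Submodule R V) (T : V₁ × V₂ →ₗ[R] W)
    (hT : ∀ (f₁ : V₁) (f₂ : V₂), (f₁ : V) + f₂ = 0 → T (f₁, f₂) = 0) :
    ∃ L : ↥(V₁ ⊔ V₂) →ₗ[R] W, ∀ (f₁ : V₁) (f₂ : V₂) (h : (f₁ : V) + f₂ ∈ V₁ ⊔ V₂),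
      L ⟨f₁ + f₂, h⟩ = T (f₁, f₂) := by
  set S := V₁.subtype.coprod V₂.subtype
  have hker : LinearMap.ker S ≤ LinearMap.ker T := fun p hp => hT p.1 p.2 hp
  refine ⟨(LinearMap.ker S).liftQ T hker ∘ₗ S.quotKerEquivRange.symm.toLinearMap ∘ₗ
    (LinearEquiv.ofEq _ _ (V₁.sup_eq_range V₂)).toLinearMap, fun f₁ f₂ h => ?_⟩
  have hS : LinearEquiv.ofEq _ _ (V₁.sup_eq_range V₂) ⟨f₁ + f₂, h⟩
      = ⟨S (f₁, f₂), LinearMap.mem_range_self S _⟩ := rfl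
  simp only [LinearMap.coe_comp, LinearEquiv.coe_coe, Function.comp_apply, hS,
    LinearMap.quotKerEquivRange_symm_apply_image, Submodule.mkQ_apply, Submodule.liftQ_apply]

section
variable (O₁ : Submodule ℂ H₁) (O₂ : Submodule ℂ H₂)
    [O₁.HasOrthogonalProjection] [O₂.HasOrthogonalProjection] (U : O₁ ≃ₗᵢ[ℂ] O₂)

theorem gluedForm_eq_inner_gluedMap (x y : H₁ × H₂) :
    gluedForm O₁ O₂ U x y = ⟪(gluedMap O₁ O₂ U x).1, (gluedMap O₁ O₂ U y).1⟫_ℂ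
      + ⟪(gluedMap O₁ O₂ U x).2.1, (gluedMap O₁ O₂ U y).2.1⟫_ℂ
      + ⟪(gluedMap O₁ O₂ U x).2.2, (gluedMap O₁ O₂ U y).2.2⟫_ℂ := by
  have h₁ : ⟪x.1, (U.symm (O₂.orthogonalProjectionOnto y.2) : H₁)⟫_ℂ
      = ⟪(U (O₁.orthogonalProjectionOnto x.1) : H₂), O₂.orthogonalProjectionOnto y.2⟫_ℂ := by
    rw [← Submodule.inner_orthogonalProjectionOnto_eq_of_mem_right, ← Submodule.coe_inner,
      U.inner_map_eq_flip, Submodule.coe_inner]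
  have h₂ : ⟪x.2, (U (O₁.orthogonalProjectionOnto y.1) : H₂)⟫_ℂ
      = ⟪(O₂.orthogonalProjectionOnto x.2 : H₂), U (O₁.orthogonalProjectionOnto y.1)⟫_ℂ := by
    rw [← Submodule.inner_orthogonalProjectionOnto_eq_of_mem_right, Submodule.coe_inner]
  have hU : ⟪(U (O₁.orthogonalProjectionOnto x.1) : H₂), U (O₁.orthogonalProjectionOnto y.1)⟫_ℂ
      = ⟪O₁.starProjection x.1, O₁.starProjection y.1⟫_ℂ := by
    rw [← Submodule.coe_inner, U.inner_map_map, Submodule.coe_inner]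
    rfl
  simp only [gluedForm, gluedMap, h₁, h₂, ← Submodule.starProjection_apply,
    Submodule.inner_sub_starProjection, inner_add_left, inner_add_right, hU]
  ring

theorem gluedMap_mk_neg (ψ : O₁) : gluedMap O₁ O₂ U ((ψ : H₁), -(U ψ : H₂)) = 0 := by
  simp [gluedMap]

theorem gluedMap_eq_zero_of_add_eq_zero {V : Type*} [AddCommGroup V] [Module ℝ V]
    {V₁ V₂ : Submodule ℝ V} {K₁ : V₁ →ₗ[ℝ] H₁} {K₂ : V₂ →ₗ[ℝ] H₂}
    (hcompat : ∀ (f : V) (h₁ : f ∈ V₁) (h₂ : f ∈ V₂),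
      ∃ hm : K₁ ⟨f, h₁⟩ ∈ O₁, (U ⟨K₁ ⟨f, h₁⟩, hm⟩ : H₂) = K₂ ⟨f, h₂⟩)
    {f₁ : V₁} {f₂ : V₂} (h : (f₁ : V) + f₂ = 0) :
    gluedMap O₁ O₂ U (K₁ f₁, K₂ f₂) = 0 := by
  have hf₁ : (f₁ : V) ∈ V₂ := by
    rw [eq_neg_of_add_eq_zero_left h]
    exact neg_mem f₂.2
  have hf₂ : f₂ = -⟨f₁, hf₁⟩ := by
    ext
    exact eq_neg_of_add_eq_zero_right h
  obtain ⟨hm, hU⟩ := hcompat f₁ f₁.2 hf₁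
  rw [hf₂, map_neg, ← hU]
  exact gluedMap_mk_neg O₁ O₂ U ⟨K₁ f₁, hm⟩

end

/-- The glued map `K̃` is well defined: for a compatible pair `(K₁, K₂)`, if
`f₁ + f₂ = g₁ + g₂` then `(K₁f₁ − K₁g₁, K₂f₂ − K₂g₂)` is a null vector of `B`, equivalently
`Φ(K₁f₁, K₂f₂) = Φ(K₁g₁, K₂g₂)`; consequently `f ↦ Φ(K₁f₁, K₂f₂)` (for any decomposition
`f = f₁ + f₂`) is a well-defined real-linear map on the subspace `V₁ + V₂` of `V`. -/
theorem gluedMap_well_defined (O₁ : Submodule ℂ H₁) (O₂ : Submodule ℂ H₂)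
    [Submodule.HasOrthogonalProjection O₁] [Submodule.HasOrthogonalProjection O₂]
    (U : O₁ ≃ₗᵢ[ℂ] O₂)
    {V : Type*} [AddCommGroup V] [Module ℝ V] (V₁ V₂ : Submodule ℝ V)
    (K₁ : V₁ →ₗ[ℝ] H₁) (K₂ : V₂ →ₗ[ℝ] H₂)
    (hcompat : ∀ (f : V) (h₁ : f ∈ V₁) (h₂ : f ∈ V₂),
      ∃ hm : K₁ ⟨f, h₁⟩ ∈ O₁, (U ⟨K₁ ⟨f, h₁⟩, hm⟩ : H₂) = K₂ ⟨f, h₂⟩) :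
    (∀ (f₁ g₁ : V₁) (f₂ g₂ : V₂), (f₁ : V) + (f₂ : V) = (g₁ : V) + (g₂ : V) →
      gluedForm O₁ O₂ U (K₁ f₁ - K₁ g₁, K₂ f₂ - K₂ g₂) (K₁ f₁ - K₁ g₁, K₂ f₂ - K₂ g₂) = 0
      ∧ gluedMap O₁ O₂ U (K₁ f₁, K₂ f₂) = gluedMap O₁ O₂ U (K₁ g₁, K₂ g₂))
    ∧ ∃ Ktilde : ↥(V₁ ⊔ V₂) →ₗ[ℝ] H₁ × H₂ × H₂,
        ∀ (f₁ : V₁) (f₂ : V₂) (h : (f₁ : V) + (f₂ : V) ∈ V₁ ⊔ V₂),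
          Ktilde ⟨(f₁ : V) + (f₂ : V), h⟩ = gluedMap O₁ O₂ U (K₁ f₁, K₂ f₂) := by
  have hzero : ∀ (f₁ : V₁) (f₂ : V₂), (f₁ : V) + f₂ = 0 →
      gluedMap O₁ O₂ U (K₁ f₁, K₂ f₂) = 0 :=
    fun _ _ h => gluedMap_eq_zero_of_add_eq_zero O₁ O₂ U hcompat h
  refine ⟨fun f₁ g₁ f₂ g₂ hfg => ?_, Submodule.exists_linearMap_sup_apply_add V₁ V₂
    (((gluedMapₗ O₁ O₂ U).restrictScalars ℝ) ∘ₗ K₁.prodMap K₂) hzero⟩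
  have hdiff : gluedMap O₁ O₂ U (K₁ f₁ - K₁ g₁, K₂ f₂ - K₂ g₂) = 0 := by
    rw [← map_sub, ← map_sub]
    exact hzero _ _ (by rw [V₁.coe_sub, V₂.coe_sub, sub_add_sub_comm, hfg, sub_self])
  refine ⟨by simp [gluedForm_eq_inner_gluedMap, hdiff], ?_⟩
  rw [← sub_eq_zero, ← hdiff, ← Prod.mk_sub_mk]
  exact (map_sub (gluedMapₗ O₁ O₂ U) _ _).symm

end
end
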